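/- For γ ∈ (0,1) and every y ∈ (0,1), the density of the absolutely continuous part of the structural distribution of the one-parameter (γ) Gnedin–Fisher model has the closed form ∑_{ξ=2}^{∞} [γ(1−γ)_{ξ−1}/ξ!] · ξ(ξ−1) · y(1−y)^{ξ−2} = γ(1−γ)·y^{γ−1}, and the series converges. -/

import Mathlib

/-- Rising factorial `(x)_m = x (x+1) ⋯ (x+m-1)`, with `(x)_0 = 1`. -/
noncomputable def riseFact (x : ℝ) (m : ℕ) : ℝ := ∏ i ∈ Finset.range m, (x + i)

lemma riseFact_succ (x : ℝ) (m : ℕ) : riseFact x (m + 1) = riseFact x m * (x + m) :=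
  Finset.prod_range_succ _ _

lemma riseFact_succ' (x : ℝ) (m : ℕ) : riseFact x (m + 1) = x * riseFact (x + 1) m := by
  rw [riseFact, Finset.prod_range_succ']
  simp only [Nat.cast_zero, add_zero, mul_comm]
  rw [riseFact]
  congr 1
  refine Finset.prod_congr rfl fun i _ => ?_
  push_cast; ring

lemma riseFact_pos {x : ℝ} (hx : 0 < x) (m : ℕ) : 0 < riseFact x m :=
  Finset.prod_pos fun i _ => by positivity

lemma riseFact_le {a : ℝ} (ha : 0 < a) (ha2 : a ≤ 2) (j : ℕ) :
    riseFact a j ≤ (Nat.factorial (j + 1) : ℝ) := by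
  induction j with
  | zero => simp [riseFact]
  | succ k ih =>
      rw [riseFact_succ]
      have h1 : (0:ℝ) < riseFact a k := riseFact_pos ha k
      have h2 : a + k ≤ (k:ℝ) + 2 := by linarith
      calc riseFact a k * (a + k) ≤ (Nat.factorial (k+1) : ℝ) * ((k:ℝ) + 2) := by
            apply mul_le_mul ih h2 (by positivity) (by positivity)
        _ = (Nat.factorial (k + 2) : ℝ) := by
            rw [Nat.factorial_succ (k+1)]; push_cast; ring

section ODE

variable {a : ℝ} (ha : 0 < a) (ha2 : a ≤ 2)

/-- coefficient `(a)_j / j!` -/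
noncomputable def bc (a : ℝ) (j : ℕ) : ℝ := riseFact a j / (Nat.factorial j : ℝ)

include ha ha2 in
lemma bc_le (j : ℕ) : bc a j ≤ (j : ℝ) + 1 := by
  rw [bc, div_le_iff₀ (by positivity)]
  calc riseFact a j ≤ (Nat.factorial (j+1) : ℝ) := riseFact_le ha ha2 j
    _ = ((j:ℝ)+1) * (Nat.factorial j : ℝ) := by rw [Nat.factorial_succ]; push_cast; ring

include ha in
lemma bc_pos (j : ℕ) : 0 < bc a j := div_pos (riseFact_pos ha j) (by positivity)

lemma bc_zero : bc a 0 = 1 := by simp [bc, riseFact]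

include ha in
lemma bc_rec (j : ℕ) : bc a (j+1) * ((j:ℝ)+1) = (a + j) * bc a j := by
  have hj : (Nat.factorial j : ℝ) ≠ 0 := by positivity
  rw [bc, bc, riseFact_succ, Nat.factorial_succ]
  push_cast
  field_simp

lemma summable_quad {r : ℝ} (hr : |r| < 1) :
    Summable (fun j : ℕ => ((j:ℝ)+1)*((j:ℝ)+2)*r^j) := by
  have h2 := summable_pow_mul_geometric_of_norm_lt_one (R := ℝ) 2 (by rwa [Real.norm_eq_abs])
  have h1 := summable_pow_mul_geometric_of_norm_lt_one (R := ℝ) 1 (by rwa [Real.norm_eq_abs])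
  have h0 := summable_geometric_of_abs_lt_one hr
  have := (h2.add ((h1.mul_left 3).add (h0.mul_left 2)))
  refine this.congr fun j => ?_
  push_cast
  ring

lemma summable_deriv_bound {r : ℝ} (hr : |r| < 1) :
    Summable (fun j : ℕ => (j:ℝ)*((j:ℝ)+1)*r^(j-1)) := by
  rw [← summable_nat_add_iff 1]
  refine (summable_quad hr).congr fun j => ?_
  simp only [Nat.add_sub_cancel]
  push_cast
  ring

include ha ha2 in
lemma summable_bc {z : ℝ} (hz : |z| < 1) : Summable (fun j : ℕ => bc a j * z ^ j) := by
  have h1 := summable_pow_mul_geometric_of_norm_lt_one (R := ℝ) 1 (r := |z|) (by rwa [Real.norm_eq_abs, abs_abs])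
  have h0 := summable_geometric_of_abs_lt_one (by rwa [abs_abs] : |(|z|)| < 1)
  refine Summable.of_norm_bounded (h1.add h0) fun j => ?_
  rw [Real.norm_eq_abs, abs_mul, abs_pow]
  have hb := bc_pos ha j
  have hb2 := bc_le ha ha2 j
  rw [abs_of_pos hb]
  have : (0:ℝ) ≤ |z|^j := by positivity
  calc bc a j * |z|^j ≤ ((j:ℝ)+1) * |z|^j := by nlinarith
    _ = (j:ℝ)^1 * |z|^j + |z|^j := by ring

include ha ha2 in
lemma summable_bc_deriv {z : ℝ} (hz : |z| < 1) :
    Summable (fun j : ℕ => bc a j * ((j:ℝ) * z ^ (j-1))) := by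
  refine Summable.of_norm_bounded (summable_deriv_bound (r := |z|) (by rwa [abs_abs])) fun j => ?_
  rw [Real.norm_eq_abs, abs_mul, abs_mul, abs_pow]
  have hb := bc_pos ha j
  have hb2 := bc_le ha ha2 j
  rw [abs_of_pos hb, Nat.abs_cast]
  have h1 : (0:ℝ) ≤ (j:ℝ) * |z|^(j-1) := by positivity
  calc bc a j * ((j:ℝ) * |z|^(j-1)) ≤ ((j:ℝ)+1) * ((j:ℝ) * |z|^(j-1)) :=
        mul_le_mul_of_nonneg_right hb2 h1
    _ = (j:ℝ)*((j:ℝ)+1)*|z|^(j-1) := by ring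

noncomputable def bf (a : ℝ) (z : ℝ) : ℝ := ∑' j : ℕ, bc a j * z ^ j

noncomputable def bD (a : ℝ) (z : ℝ) : ℝ := ∑' j : ℕ, bc a j * ((j:ℝ) * z ^ (j-1))

include ha ha2 in
lemma ode {z : ℝ} (hz : |z| < 1) : (1 - z) * bD a z = a * bf a z := by
  have hS := summable_bc_deriv ha ha2 hz
  have hSf := summable_bc ha ha2 hz
  have h1 : bD a z = ∑' j : ℕ, bc a (j+1) * (((j:ℝ)+1) * z ^ j) := by
    rw [bD, Summable.tsum_eq_zero_add hS]
    simp only [Nat.cast_zero, zero_mul, mul_zero, zero_add]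
    refine tsum_congr fun j => ?_
    push_cast
    simp [Nat.add_sub_cancel]
  have h2 : ∀ j : ℕ, bc a (j+1) * (((j:ℝ)+1) * z ^ j)
      = a * (bc a j * z ^ j) + z * (bc a j * ((j:ℝ) * z ^ (j-1))) := by
    intro j
    have := bc_rec ha j
    cases j with
    | zero => simpa [bc_zero] using this
    | succ k =>
        simp only [Nat.add_sub_cancel]
        push_cast at this ⊢
        simp only [pow_succ']
        linear_combination (z * z ^ k) * this
  have h3 : bD a z = a * bf a z + z * bD a z := by
    conv_lhs => rw [h1]
    have := Summable.tsum_add (hSf.mul_left a) (hS.mul_left z)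
    unfold bf bD
    rw [← tsum_mul_left, ← tsum_mul_left, ← this]
    exact tsum_congr h2
  linarith [h3]

include ha ha2 in
lemma bf_hasDerivAt {z : ℝ} (hz : |z| < 1) : HasDerivAt (bf a) (bD a z) z := by
  set r : ℝ := (1 + |z|) / 2 with hr
  have hr0 : 0 < r := by positivity
  have hrz : |z| < r := by rw [hr]; linarith
  have hr1 : r < 1 := by rw [hr]; linarith
  have hu : Summable (fun j : ℕ => (j:ℝ)*((j:ℝ)+1)*r^(j-1)) :=
    summable_deriv_bound (by rwa [abs_of_pos hr0])
  refine hasDerivAt_tsum_of_isPreconnected hu (isOpen_Ioo (a := -r) (b := r))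
    (convex_Ioo _ _).isPreconnected (g := fun j w => bc a j * w ^ j)
    (g' := fun j w => bc a j * ((j:ℝ) * w ^ (j-1)))
    (fun j w _ => (hasDerivAt_pow j w).const_mul (bc a j))
    (fun j w hw => ?_) (y₀ := 0) ⟨neg_lt_zero.mpr hr0, hr0⟩
    (summable_bc ha ha2 (by simp)) ⟨neg_lt_of_abs_lt hrz, lt_of_abs_lt hrz⟩
  have hwr : |w| ≤ r := by
    rw [abs_le]; exact ⟨hw.1.le, hw.2.le⟩
  rw [Real.norm_eq_abs, abs_mul, abs_mul, abs_pow, abs_of_pos (bc_pos ha j), Nat.abs_cast]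
  have h1 : (0:ℝ) ≤ (j:ℝ) * |w|^(j-1) := by positivity
  calc bc a j * ((j:ℝ) * |w|^(j-1)) ≤ ((j:ℝ)+1) * ((j:ℝ) * |w|^(j-1)) :=
        mul_le_mul_of_nonneg_right (bc_le ha ha2 j) h1
    _ ≤ ((j:ℝ)+1) * ((j:ℝ) * r^(j-1)) := by
        have h3 : |w|^(j-1) ≤ r^(j-1) := pow_le_pow_left₀ (abs_nonneg w) hwr _
        have h2 : (0:ℝ) ≤ (j:ℝ) := Nat.cast_nonneg j
        exact mul_le_mul_of_nonneg_left (mul_le_mul_of_nonneg_left h3 h2) (by positivity)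
    _ = (j:ℝ)*((j:ℝ)+1)*r^(j-1) := by ring

end ODE

section ODE2

variable {a : ℝ} (ha : 0 < a) (ha2 : a ≤ 2)

lemma bf_zero : bf a 0 = 1 := by
  rw [bf, tsum_eq_single 0 (fun j hj => ?_)]
  · simp [bc_zero]
  · cases j with
    | zero => exact absurd rfl hj
    | succ k => simp

include ha ha2 in
lemma bf_eq {x : ℝ} (hx0 : 0 ≤ x) (hx1 : x < 1) : (1 - x) ^ a * bf a x = 1 := by
  set g : ℝ → ℝ := fun w => (1 - w) ^ a * bf a w with hgdef
  have hg : ∀ w ∈ Set.Icc (0:ℝ) x, HasDerivAt g 0 w := by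
    intro w hw
    have hw1 : |w| < 1 := by
      rw [abs_lt]; exact ⟨by linarith [hw.1], by linarith [hw.2]⟩
    have hne : (1 : ℝ) - w ≠ 0 := by
      have := lt_of_abs_lt hw1; linarith
    have h1 : HasDerivAt (fun w : ℝ => 1 - w) (-1) w := (hasDerivAt_id w).const_sub 1
    have h2 : HasDerivAt (fun w : ℝ => (1 - w) ^ a) (-1 * a * (1 - w) ^ (a - 1)) w :=
      HasDerivAt.rpow_const h1 (Or.inl hne)
    have h3 := h2.mul (bf_hasDerivAt ha ha2 hw1)
    refine h3.congr_deriv ?_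
    symm
    have hode := ode ha ha2 hw1
    have hsplit : (1 - w) ^ a = (1 - w) ^ (a - 1) * (1 - w) := by
      rw [show a = (a - 1) + 1 by ring, Real.rpow_add_one hne]
      norm_num
    rw [hsplit]
    linear_combination (-(1 - w) ^ (a - 1)) * hode
  have hcont : ContinuousOn g (Set.Icc 0 x) := fun w hw =>
    ((hg w hw).continuousAt.continuousWithinAt)
  have hconst := constant_of_has_deriv_right_zero hcont
    (fun w hw => (hg w (Set.mem_Icc_of_Ico hw)).hasDerivWithinAt) x
    (Set.right_mem_Icc.mpr hx0)
  have hg0 : g 0 = 1 := by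
    simp [hgdef, bf_zero, Real.one_rpow]
  rw [hgdef] at hconst
  simpa [hg0] using hconst.trans hg0

end ODE2

/-- The density of the absolutely continuous part of the structural distribution of
the one-parameter `(γ)` Gnedin–Fisher model:
`∑_{ξ≥2} [γ (1-γ)_{ξ-1} / ξ!] ξ(ξ-1) y(1-y)^{ξ-2} = γ(1-γ) y^{γ-1}`,
and the series converges. -/
theorem gnedin_fisher_one_param_structural_density (γ : ℝ) (hγ0 : 0 < γ) (hγ1 : γ < 1)
    (y : ℝ) (hy0 : 0 < y) (hy1 : y < 1) :
    Summable (fun j : ℕ =>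
        γ * riseFact (1 - γ) (j + 1) / (Nat.factorial (j + 2) : ℝ) *
          (((j + 2 : ℕ) : ℝ) * ((j + 1 : ℕ) : ℝ)) * y * (1 - y) ^ j) ∧
    (∑' j : ℕ,
        γ * riseFact (1 - γ) (j + 1) / (Nat.factorial (j + 2) : ℝ) *
          (((j + 2 : ℕ) : ℝ) * ((j + 1 : ℕ) : ℝ)) * y * (1 - y) ^ j) =
      γ * (1 - γ) * y ^ (γ - 1) := by
  have ha : (0:ℝ) < 2 - γ := by linarith
  have ha2 : (2:ℝ) - γ ≤ 2 := by linarith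
  have hz : |1 - y| < 1 := by rw [abs_lt]; constructor <;> linarith
  have hterm : ∀ j : ℕ,
      γ * riseFact (1 - γ) (j + 1) / (Nat.factorial (j + 2) : ℝ) *
          (((j + 2 : ℕ) : ℝ) * ((j + 1 : ℕ) : ℝ)) * y * (1 - y) ^ j
        = (γ * (1 - γ) * y) * (bc (2 - γ) j * (1 - y) ^ j) := by
    intro j
    have h1 : riseFact (1 - γ) (j + 1) = (1 - γ) * riseFact (2 - γ) j := by
      rw [riseFact_succ' (1 - γ) j, show (1:ℝ) - γ + 1 = 2 - γ by ring]
    have h2 : (Nat.factorial (j + 2) : ℝ)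
        = ((j:ℝ) + 2) * (((j:ℝ) + 1) * (Nat.factorial j : ℝ)) := by
      rw [Nat.factorial_succ (j+1), Nat.factorial_succ j]; push_cast; ring
    have hj : (Nat.factorial j : ℝ) ≠ 0 := by positivity
    rw [bc, h1, h2]
    push_cast
    field_simp
  have hsum : Summable (fun j : ℕ => (γ * (1 - γ) * y) * (bc (2 - γ) j * (1 - y) ^ j)) :=
    (summable_bc ha ha2 hz).mul_left _
  have hbf : bf (2 - γ) (1 - y) = y ^ (γ - (2:ℝ)) := by
    have := bf_eq ha ha2 (x := 1 - y) (by linarith) (by linarith)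
    rw [show (1:ℝ) - (1 - y) = y by ring] at this
    have hy2 : y ^ ((2:ℝ) - γ) ≠ 0 := by
      positivity
    have h3 : y ^ (γ - (2:ℝ)) * (y ^ ((2:ℝ) - γ) * bf (2 - γ) (1 - y))
        = y ^ (γ - (2:ℝ)) * 1 := by rw [this]
    rwa [← mul_assoc, ← Real.rpow_add hy0, show γ - 2 + (2 - γ) = (0:ℝ) by ring,
      Real.rpow_zero, one_mul, mul_one] at h3
  constructor
  · exact hsum.congr fun j => (hterm j).symm
  · rw [tsum_congr hterm, tsum_mul_left]
    rw [show (∑' j : ℕ, bc (2 - γ) j * (1 - y) ^ j) = bf (2 - γ) (1 - y) from rfl, hbf]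
    rw [show γ - 1 = 1 + (γ - 2) by ring, Real.rpow_add hy0, Real.rpow_one]
    ring
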